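/- Let q be a prime power and m a positive integer with gcd(m, q) = 1. For every b ∈ F_q^*, there exist exactly Φ(x^m − 1)/(q − 1) elements β ∈ F_{q^m} that are normal over F_q and satisfy Tr_{m/1}(β) = b. -/

import Mathlib

open Polynomial

/-- The `q`-associate linearized map: for `f = Σ fᵢ xⁱ ∈ K[x]`,
`qAssoc q f β = Σ fᵢ β^(qⁱ)`. -/
noncomputable def qAssoc (q : ℕ) {K F : Type*} [Field K] [Field F] [Algebra K F]
    (f : K[X]) (β : F) : F :=
  ∑ i ∈ Finset.range (f.natDegree + 1), f.coeff i • β ^ q ^ i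

/-- `h` is the `F_q`-order of `β`: the monic polynomial of least degree with `L_h(β) = 0`. -/
def IsOrd (q : ℕ) {K F : Type*} [Field K] [Field F] [Algebra K F] (β : F) (h : K[X]) : Prop :=
  h.Monic ∧ qAssoc q h β = 0 ∧
    ∀ g : K[X], g.Monic → qAssoc q g β = 0 → h.natDegree ≤ g.natDegree

/-- `β` is normal for the degree-`m` extension `F/K` with `|K| = q`: its conjugates
`β, β^q, …, β^(q^(m-1))` form a `K`-basis of `F`. -/
def IsNormalElem (q m : ℕ) (K : Type*) {F : Type*} [Field K] [Field F] [Algebra K F]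
    (β : F) : Prop :=
  LinearIndependent K (fun i : Fin m => β ^ q ^ (i : ℕ)) ∧
    Submodule.span K (Set.range fun i : Fin m => β ^ q ^ (i : ℕ)) = ⊤

/-- `b` lies in the intermediate field `F_{q^d} = {x | x^(q^d) = x}` and is normal over
`K = F_q` as an element of `F_{q^d}`: its conjugates `b, b^q, …, b^(q^(d-1))` form a
`K`-basis of `F_{q^d}`. -/
def IsNormalSub (q d : ℕ) (K : Type*) {F : Type*} [Field K] [Field F] [Algebra K F]
    (b : F) : Prop :=
  b ^ q ^ d = b ∧
    LinearIndependent K (fun i : Fin d => b ^ q ^ (i : ℕ)) ∧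
    Submodule.span K (Set.range fun i : Fin d => b ^ q ^ (i : ℕ)) =
      Submodule.span K {x : F | x ^ q ^ d = x}

/-- The relative trace: `trQ q e n α = Σ_{i=0}^{n-1} α^(q^(i·e))`; with `n = m / e` this is
`Tr_{m/e}(α)`, the trace from `F_{q^m}` to `F_{q^e}`. -/
def trQ (q e n : ℕ) {F : Type*} [Field F] (α : F) : F :=
  ∑ i ∈ Finset.range n, α ^ q ^ (i * e)

/-- `α` is a primitive element: it generates the multiplicative group. -/
def IsPrimitiveElem {F : Type*} [Field F] (α : F) : Prop :=
  ∀ x : F, x ≠ 0 → ∃ n : ℕ, x = α ^ n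

/-- `Φ(f)`: the order of the unit group of `K[x]/(f)`. -/
noncomputable def PhiQ {K : Type*} [Field K] (f : K[X]) : ℕ :=
  Nat.card (K[X] ⧸ Ideal.span {f})ˣ

/-- `W(n)`: the number of squarefree positive divisors of `n`. -/
def Wnat (n : ℕ) : ℕ := (n.divisors.filter Squarefree).card

/-- `W(f)`: the number of monic squarefree divisors of `f` in `K[x]`. -/
noncomputable def Wpoly {K : Type*} [Field K] (f : K[X]) : ℕ :=
  Nat.card {g : K[X] // g.Monic ∧ Squarefree g ∧ g ∣ f}

/-- `d ∈ λ_k(m)`: a strictly increasing `k`-tuple of divisors of `m`, all `< m`,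
with `dᵢ ∤ dⱼ` for `i < j`. -/
def LambdaTuple (m k : ℕ) (d : Fin k → ℕ) : Prop :=
  (∀ i, d i ∣ m) ∧ (∀ i, d i < m) ∧ StrictMono d ∧ ∀ i j : Fin k, i < j → ¬ d i ∣ d j

/-- `λ(d) = deg lcm(x^(d₁) - 1, …, x^(d_k) - 1)` (computed in characteristic zero, where it
agrees with the inclusion–exclusion formula of the gcd's). -/
noncomputable def lambdaDeg {k : ℕ} (d : Fin k → ℕ) : ℕ :=
  (Finset.univ.lcm fun i : Fin k => (X : ℤ[X]) ^ (d i) - 1).natDegree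

/-- The tuple `a` is `d`-admissible. -/
def DAdmissible (q : ℕ) {F : Type*} [Field F] {k : ℕ} (d : Fin k → ℕ) (a : Fin k → F) : Prop :=
  ∀ i j : Fin k, i < j →
    trQ q (Nat.gcd (d i) (d j)) (d i / Nat.gcd (d i) (d j)) (a i) =
      trQ q (Nat.gcd (d i) (d j)) (d j / Nat.gcd (d i) (d j)) (a j)

/-- `g` is the monic gcd of `f` and `h` in `K[x]`. -/
def IsMonicGcd {K : Type*} [Field K] (f h g : K[X]) : Prop :=
  g.Monic ∧ g ∣ f ∧ g ∣ h ∧ ∀ e : K[X], e ∣ f → e ∣ h → e ∣ g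

/-- `g` is the monic lcm of the family `s` in `K[x]`. -/
def IsMonicLcm {K : Type*} [Field K] {ι : Type*} (s : ι → K[X]) (g : K[X]) : Prop :=
  g.Monic ∧ (∀ i, s i ∣ g) ∧ ∀ h : K[X], (∀ i, s i ∣ h) → g ∣ h

set_option linter.unusedSectionVars false
set_option linter.unusedVariables false
set_option maxHeartbeats 1000000
set_option synthInstance.maxHeartbeats 400000

open scoped DirectSum

section Aux

variable {K F : Type*} [Field K] [Fintype K] [Field F] [Algebra K F]

/-- The `q`-power map as a `K`-linear endomorphism of `F`. -/
noncomputable def frobL (q : ℕ) (hadd : ∀ x y : F, (x + y) ^ q = x ^ q + y ^ q)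
    (hK : ∀ c : K, c ^ q = c) : F →ₗ[K] F where
  toFun x := x ^ q
  map_add' := hadd
  map_smul' c x := by
    simp only [Algebra.smul_def, mul_pow, ← map_pow, hK c, RingHom.id_apply]

variable {q m : ℕ} {φ : F →ₗ[K] F} (hφ : ∀ x : F, φ x = x ^ q)

lemma pow_q_add (x : F) (a b : ℕ) : x ^ q ^ (a + b) = (x ^ q ^ a) ^ q ^ b := by
  rw [← pow_mul, ← pow_add]

include hφ in
lemma frob_pow_apply (i : ℕ) (x : F) : (φ ^ i) x = x ^ q ^ i := by
  induction i with
  | zero => simp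
  | succ n ih =>
    rw [pow_succ', Module.End.mul_apply, ih, hφ, ← pow_mul, ← pow_succ]

include hφ in
lemma aeval_frob_apply (g : K[X]) (x : F) :
    (aeval φ g) x = ∑ i ∈ Finset.range (g.natDegree + 1), g.coeff i • x ^ q ^ i := by
  rw [aeval_eq_sum_range]
  rw [LinearMap.coe_sum, Finset.sum_apply]
  exact Finset.sum_congr rfl fun i _ => by
    rw [LinearMap.smul_apply, frob_pow_apply hφ]

lemma artin (hq2 : 2 ≤ q) (hFcard : Nat.card F = q ^ m) {g : K[X]} (hg : g ≠ 0)
    (hann : ∀ x : F, ∑ i ∈ Finset.range (g.natDegree + 1), g.coeff i • x ^ q ^ i = 0) :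
    m ≤ g.natDegree := by
  by_contra hlt
  push_neg at hlt
  have hF : Finite F := by
    refine Nat.finite_of_card_ne_zero ?_
    rw [hFcard]
    positivity
  cases nonempty_fintype F
  set d := g.natDegree with hd
  set P : F[X] := ∑ i ∈ Finset.range (d + 1), C (algebraMap K F (g.coeff i)) * X ^ q ^ i with hP
  have hqinj : Function.Injective (fun i : ℕ => q ^ i) := fun a b h =>
    Nat.pow_right_injective hq2 h
  have hco : P.coeff (q ^ d) = algebraMap K F (g.coeff d) := by
    rw [hP, finset_sum_coeff]
    rw [Finset.sum_eq_single d]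
    · simp
    · intro i hi hne
      rw [coeff_C_mul, coeff_X_pow, if_neg (fun h => hne (hqinj h.symm)), mul_zero]
    · intro h
      exact absurd (Finset.self_mem_range_succ d) h
  have hdeg : P.natDegree < Fintype.card F := by
    have h1 : P.natDegree ≤ q ^ d := by
      refine natDegree_sum_le_of_forall_le _ _ fun i hi => ?_
      refine (natDegree_C_mul_le _ _).trans ?_
      simp only [natDegree_X_pow]
      exact Nat.pow_le_pow_right (by omega) (Nat.lt_succ_iff.mp (Finset.mem_range.mp hi))
    have h2 : q ^ d < q ^ m := Nat.pow_lt_pow_right hq2 hlt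
    have : Fintype.card F = q ^ m := by rw [← Nat.card_eq_fintype_card, hFcard]
    omega
  have hev : ∀ x ∈ (Finset.univ : Finset F), P.eval x = 0 := by
    intro x _
    rw [hP, eval_finset_sum]
    rw [← hann x]
    exact Finset.sum_congr rfl fun i _ => by
      rw [eval_mul, eval_C, eval_pow, eval_X, Algebra.smul_def]
  have hP0 : P = 0 :=
    eq_zero_of_natDegree_lt_card_of_eval_eq_zero' P Finset.univ hev
      (by simpa using hdeg)
  have : algebraMap K F (g.coeff d) ≠ 0 := by
    have h1 : g.coeff d ≠ 0 := fun h => hg (leadingCoeff_eq_zero.mp h)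
    simpa using h1
  rw [hP0] at hco
  simp only [coeff_zero] at hco
  exact this hco.symm

end Aux


section Aux2

variable {K F : Type*} [Field K] [Fintype K] [Field F] [Algebra K F]
variable {q m : ℕ} {φ : F →ₗ[K] F} (hφ : ∀ x : F, φ x = x ^ q)

lemma pow_q_add' (x : F) (a b : ℕ) : x ^ q ^ (a + b) = (x ^ q ^ a) ^ q ^ b := by
  rw [← pow_mul, ← pow_add]

include hφ in
lemma frob_pow_apply' (i : ℕ) (x : F) : (φ ^ i) x = x ^ q ^ i := by
  induction i with
  | zero => simp
  | succ n ih =>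
    rw [pow_succ', Module.End.mul_apply, ih, hφ, ← pow_mul, ← pow_succ]

include hφ in
lemma aeval_frob_apply' (g : K[X]) (x : F) :
    (aeval φ g) x = ∑ i ∈ Finset.range (g.natDegree + 1), g.coeff i • x ^ q ^ i := by
  rw [aeval_eq_sum_range, LinearMap.coe_sum, Finset.sum_apply]
  exact Finset.sum_congr rfl fun i _ => by
    rw [LinearMap.smul_apply, frob_pow_apply' hφ]

variable (hqm : ∀ x : F, x ^ q ^ m = x) (hm0 : 0 < m)

include hqm in
lemma pow_q_mul_m (β : F) (a : ℕ) : β ^ q ^ (m * a) = β := by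
  induction a with
  | zero => simp
  | succ n ih =>
    rw [Nat.mul_succ, pow_q_add', ih, hqm]

include hqm hm0 in
lemma conj_mem (β : F) (j : ℕ) :
    β ^ q ^ j ∈ Submodule.span K (Set.range fun i : Fin m => β ^ q ^ (i : ℕ)) := by
  have : β ^ q ^ j = β ^ q ^ (j % m) := by
    conv_lhs => rw [← Nat.div_add_mod j m]
    rw [pow_q_add', pow_q_mul_m hqm]
  rw [this]
  exact Submodule.subset_span ⟨⟨j % m, Nat.mod_lt j hm0⟩, rfl⟩

include hφ hqm hm0 in
lemma span_iff (β : F) :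
    Submodule.span K[X] {Module.AEval'.of φ β} = ⊤ ↔
      Submodule.span K (Set.range fun i : Fin m => β ^ q ^ (i : ℕ)) = ⊤ := by
  constructor
  · intro h
    rw [eq_top_iff]
    rintro x -
    have hx : Module.AEval'.of φ x ∈ Submodule.span K[X] {Module.AEval'.of φ β} := by
      rw [h]; trivial
    obtain ⟨g, hg⟩ := Submodule.mem_span_singleton.mp hx
    have hx2 : x = (aeval φ g) β := by
      apply (Module.AEval'.of φ).injective
      rw [← hg, ← Module.AEval.of_aeval_smul, Module.End.smul_def]
    rw [hx2, aeval_frob_apply' hφ]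
    exact Submodule.sum_mem _ fun i _ =>
      Submodule.smul_mem _ _ (conj_mem hqm hm0 β i)
  · intro h
    rw [eq_top_iff]
    rintro y -
    have hx : (Module.AEval'.of φ).symm y ∈
        Submodule.span K (Set.range fun i : Fin m => β ^ q ^ (i : ℕ)) := by
      rw [h]; trivial
    have h2 : ∀ z ∈ Submodule.span K (Set.range fun i : Fin m => β ^ q ^ (i : ℕ)),
        Module.AEval'.of φ z ∈ Submodule.span K[X] {Module.AEval'.of φ β} := by
      intro z hz
      induction hz using Submodule.span_induction with
      | mem w hw =>
        obtain ⟨i, rfl⟩ := hw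
        have hkey : (X : K[X]) ^ (i : ℕ) • Module.AEval'.of φ β
            = Module.AEval'.of φ (β ^ q ^ (i : ℕ)) := by
          rw [← Module.AEval.of_aeval_smul]
          congr 1
          rw [map_pow, aeval_X, Module.End.smul_def, frob_pow_apply' hφ]
        rw [← hkey]
        exact Submodule.smul_mem _ _ (Submodule.mem_span_singleton_self _)
      | zero => simp
      | add u v hu hv ihu ihv => rw [map_add]; exact Submodule.add_mem _ ihu ihv
      | smul c w hw ihw =>
        rw [map_smul, ← Module.AEval.C_smul]
        exact Submodule.smul_mem _ _ ihw
    have := h2 _ hx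
    simpa using this

variable [FiniteDimensional K F] (hm : Module.finrank K F = m)

include hφ hqm hm0 hm in
lemma normal_iff_span (β : F) :
    (LinearIndependent K (fun i : Fin m => β ^ q ^ (i : ℕ)) ∧
      Submodule.span K (Set.range fun i : Fin m => β ^ q ^ (i : ℕ)) = ⊤) ↔
      Submodule.span K[X] {Module.AEval'.of φ β} = ⊤ := by
  rw [span_iff hφ hqm hm0]
  constructor
  · exact fun h => h.2
  · intro h
    refine ⟨?_, h⟩
    apply linearIndependent_of_top_le_span_of_card_eq_finrank (h ▸ le_rfl)
    rw [Fintype.card_fin, hm]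

include hφ hqm in
lemma ann_all (x : Module.AEval' φ) : ((X : K[X]) ^ m - 1) • x = 0 := by
  apply (Module.AEval'.of φ).symm.injective
  rw [Module.AEval.of_symm_smul]
  rw [map_sub, map_pow, aeval_X, map_one, Module.End.smul_def]
  rw [LinearMap.sub_apply, Module.End.one_apply, frob_pow_apply' hφ, hqm]
  simp

end Aux2
set_option maxHeartbeats 1000000
set_option synthInstance.maxHeartbeats 400000

section Aux3

variable {K : Type*} [Field K]

lemma assoc_of_dvd_of_deg {a b : K[X]} (h : a ∣ b) (hb : b ≠ 0)
    (hdeg : b.natDegree ≤ a.natDegree) : Associated a b := by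
  obtain ⟨c, rfl⟩ := h
  have ha : a ≠ 0 := left_ne_zero_of_mul hb
  have hc : c ≠ 0 := right_ne_zero_of_mul hb
  have hdc : c.natDegree = 0 := by
    have := natDegree_mul ha hc
    omega
  have hcu : IsUnit c := by
    rw [eq_C_of_natDegree_eq_zero hdc]
    refine isUnit_C.mpr (isUnit_iff_ne_zero.mpr ?_)
    intro h0
    exact hc (by rw [eq_C_of_natDegree_eq_zero hdc, h0, map_zero])
  exact ⟨hcu.unit, by simp⟩

lemma span_top_iff_isUnit {I : Ideal K[X]} (a : K[X] ⧸ I) :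
    Submodule.span K[X] {a} = ⊤ ↔ IsUnit a := by
  obtain ⟨s, rfl⟩ := Submodule.Quotient.mk_surjective I a
  constructor
  · intro h
    have h1 : (Submodule.Quotient.mk 1 : K[X] ⧸ I) ∈ Submodule.span K[X]
        {(Submodule.Quotient.mk s : K[X] ⧸ I)} := by rw [h]; trivial
    obtain ⟨g, hg⟩ := Submodule.mem_span_singleton.mp h1
    rw [← Submodule.Quotient.mk_smul, smul_eq_mul] at hg
    refine IsUnit.of_mul_eq_one (Submodule.Quotient.mk g) ?_
    have h2 : (Submodule.Quotient.mk s : K[X] ⧸ I) * Submodule.Quotient.mk g =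
        Submodule.Quotient.mk (g * s) := by
      rw [Ideal.Quotient.mk_eq_mk, Ideal.Quotient.mk_eq_mk, Ideal.Quotient.mk_eq_mk, ← map_mul,
        mul_comm]
    rw [h2, hg]
    rfl
  · intro h
    obtain ⟨b, hb⟩ := h.exists_right_inv
    obtain ⟨r, rfl⟩ := Submodule.Quotient.mk_surjective I b
    rw [eq_top_iff]
    rintro y -
    obtain ⟨c, rfl⟩ := Submodule.Quotient.mk_surjective I y
    refine Submodule.mem_span_singleton.mpr ⟨c * r, ?_⟩
    rw [← Submodule.Quotient.mk_smul, smul_eq_mul]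
    have : (Submodule.Quotient.mk (c * r * s) : K[X] ⧸ I) =
        Submodule.Quotient.mk c * (Submodule.Quotient.mk s * Submodule.Quotient.mk r) := by
      simp only [Ideal.Quotient.mk_eq_mk, ← map_mul]
      ring_nf
    rw [this, hb, mul_one]

lemma span_top_equiv_aux {R M N : Type*} [CommRing R] [AddCommGroup M] [AddCommGroup N]
    [Module R M] [Module R N] (e : M ≃ₗ[R] N) (x : M) (h : Submodule.span R {x} = ⊤) :
    Submodule.span R {e x} = ⊤ := by
  rw [eq_top_iff]
  rintro n -
  obtain ⟨y, rfl⟩ := e.surjective n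
  have hy : y ∈ Submodule.span R {x} := by rw [h]; trivial
  obtain ⟨g, hg⟩ := Submodule.mem_span_singleton.mp hy
  exact Submodule.mem_span_singleton.mpr ⟨g, by rw [← map_smul, hg]⟩

lemma span_top_equiv {R M N : Type*} [CommRing R] [AddCommGroup M] [AddCommGroup N]
    [Module R M] [Module R N] (e : M ≃ₗ[R] N) (x : M) :
    Submodule.span R {e x} = ⊤ ↔ Submodule.span R {x} = ⊤ := by
  constructor
  · intro h
    have := span_top_equiv_aux e.symm _ h
    rwa [e.symm_apply_apply] at this
  · exact span_top_equiv_aux e x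

noncomputable def unitsEquivIsUnit {A : Type*} [CommRing A] : Aˣ ≃ {a : A // IsUnit a} where
  toFun u := ⟨u, u.isUnit⟩
  invFun a := a.2.unit
  left_inv u := Units.ext rfl
  right_inv a := Subtype.ext a.2.unit_spec

end Aux3
section Count

universe u v
variable {K : Type u} {F : Type v} [Field K] [Fintype K] [Field F] [Algebra K F]
  [FiniteDimensional K F]

lemma smul_of_apply {q : ℕ} {φ : F →ₗ[K] F} (hφ : ∀ x : F, φ x = x ^ q) (g : K[X]) (β : F) :
    g • Module.AEval'.of φ β =
      Module.AEval'.of φ (∑ i ∈ Finset.range (g.natDegree + 1), g.coeff i • β ^ q ^ i) := by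
  rw [← Module.AEval.of_aeval_smul, Module.End.smul_def, aeval_frob_apply' hφ]

lemma count_normal {q m : ℕ} (hq : Fintype.card K = q) (hm : Module.finrank K F = m)
    (hm0 : 0 < m) {φ : F →ₗ[K] F} (hφ : ∀ x : F, φ x = x ^ q) (hqm : ∀ x : F, x ^ q ^ m = x)
    (hsq : Squarefree ((X : K[X]) ^ m - 1)) :
    Nat.card {β : F // IsNormalElem q m K β} = PhiQ ((X : K[X]) ^ m - 1) := by
  classical
  have hq2 : 2 ≤ q := hq ▸ Fintype.one_lt_card
  set f : K[X] := (X : K[X]) ^ m - 1 with hfdef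
  have hfm : f.Monic := by
    have := monic_X_pow_sub_C (1 : K) hm0.ne'
    rwa [map_one] at this
  have hf0 : f ≠ 0 := hfm.ne_zero
  have hfdeg : f.natDegree = m := by
    have := natDegree_X_pow_sub_C (n := m) (r := (1 : K))
    rwa [map_one] at this
  have hFfin : Finite F := Module.finite_of_finite K
  have hFcard : Nat.card F = q ^ m := by
    cases nonempty_fintype F
    rw [Nat.card_eq_fintype_card, Module.card_eq_pow_finrank (K := K) (V := F), hq, hm]
  -- torsion module over K[X]
  have htors : Module.IsTorsion K[X] (ULift.{max u v} (Module.AEval' φ)) := by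
    intro x
    refine ⟨⟨f, mem_nonZeroDivisors_of_ne_zero hf0⟩, ?_⟩
    have h1 : f • x.down = 0 := ann_all hφ hqm x.down
    apply ULift.ext
    simpa using h1
  obtain ⟨ι, hι, p, hp, e, ⟨ψ0⟩⟩ := Module.equiv_directSum_of_isTorsion htors
  set g : ι → K[X] := fun i => p i ^ e i with hgdef
  have hg0 : ∀ i, g i ≠ 0 := fun i => pow_ne_zero _ (hp i).ne_zero
  let Ψ : Module.AEval' φ ≃ₗ[K[X]] ⨁ i, K[X] ⧸ (K[X] ∙ g i) :=
    ((ULift.moduleEquiv : ULift.{max u v} (Module.AEval' φ) ≃ₗ[K[X]] _).symm).trans ψ0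
  have hannD : ∀ x : (⨁ i, K[X] ⧸ (K[X] ∙ g i)), f • x = 0 := by
    intro x
    have h1 : f • Ψ.symm x = 0 := ann_all hφ hqm _
    have h2 := congrArg Ψ h1
    rwa [map_smul, map_zero, Ψ.apply_symm_apply] at h2
  have hdvdf : ∀ i, g i ∣ f := by
    intro i
    set z : ⨁ i, K[X] ⧸ (K[X] ∙ g i) :=
      DirectSum.lof K[X] ι (fun i => K[X] ⧸ (K[X] ∙ g i)) i (Submodule.Quotient.mk 1) with hz
    have h2 : (f • z) i = 0 := by rw [hannD z]; rfl
    rw [DFinsupp.smul_apply, hz, DirectSum.lof_apply, ← Submodule.Quotient.mk_smul,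
      smul_eq_mul, mul_one] at h2
    obtain ⟨c, hc⟩ := Submodule.mem_span_singleton.mp ((Submodule.Quotient.mk_eq_zero _).mp h2)
    exact ⟨c, by rw [← hc, smul_eq_mul, mul_comm]⟩
  -- cardinalities
  have hcardQ : ∀ i : ι, Nat.card (K[X] ⧸ (K[X] ∙ g i)) = q ^ (g i).natDegree := by
    intro i
    let pb := AdjoinRoot.powerBasis (hg0 i)
    have e2 : AdjoinRoot (g i) ≃ (Fin pb.dim → K) :=
      pb.basis.repr.toEquiv.trans (Finsupp.equivFunOnFinite)
    have e3 : Nat.card (AdjoinRoot (g i)) = q ^ pb.dim := by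
      rw [Nat.card_congr e2, Nat.card_fun, Nat.card_eq_fintype_card, Nat.card_eq_fintype_card,
        Fintype.card_fin, hq]
    have hdim : pb.dim = (g i).natDegree := AdjoinRoot.powerBasis_dim (hg0 i)
    rw [← hdim]
    exact e3
  have hDcard : Nat.card (⨁ i, K[X] ⧸ (K[X] ∙ g i)) = ∏ i : ι, q ^ (g i).natDegree := by
    rw [Nat.card_congr (DirectSum.linearEquivFunOnFintype K[X] ι
      (fun i => K[X] ⧸ (K[X] ∙ g i))).toEquiv, Nat.card_pi]
    exact Finset.prod_congr rfl fun i _ => hcardQ i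
  have hMcard : Nat.card (⨁ i, K[X] ⧸ (K[X] ∙ g i)) = q ^ m := by
    have h1 : Nat.card F = Nat.card (⨁ i, K[X] ⧸ (K[X] ∙ g i)) :=
      Nat.card_congr ((Module.AEval'.of φ).toEquiv.trans Ψ.toEquiv)
    rw [← h1, hFcard]

  have hsum : ∑ i : ι, (g i).natDegree = m := by
    apply Nat.pow_right_injective hq2
    show q ^ (∑ i : ι, (g i).natDegree) = q ^ m
    rw [← Finset.prod_pow_eq_pow_sum, ← hDcard, hMcard]
  -- the product annihilates
  have hannM : ∀ (h : K[X]), (∀ i, g i ∣ h) → (∀ x : Module.AEval' φ, h • x = 0) := by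
    intro h hdiv x
    have h1 : h • Ψ x = 0 := by
      apply DFinsupp.ext
      intro i
      rw [DFinsupp.smul_apply, DFinsupp.zero_apply]
      obtain ⟨y, hy⟩ := Submodule.Quotient.mk_surjective _ ((Ψ x) i)
      rw [← hy, ← Submodule.Quotient.mk_smul, Submodule.Quotient.mk_eq_zero]
      obtain ⟨c, hc⟩ := (hdiv i).mul_right y
      exact Submodule.mem_span_singleton.mpr ⟨c, by rw [smul_eq_mul, mul_comm, ← hc, smul_eq_mul]⟩
    have h2 := congrArg Ψ.symm h1
    rwa [map_smul, map_zero, Ψ.symm_apply_apply] at h2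
  -- annihilator
  set J : Ideal K[X] := Module.annihilator K[X] (Module.AEval' φ) with hJ
  have hfJ : f ∈ J := Module.mem_annihilator.mpr (fun x => ann_all hφ hqm x)
  have hPJ : (∏ i, g i) ∈ J :=
    Module.mem_annihilator.mpr (hannM _ (fun i => Finset.dvd_prod_of_mem g (Finset.mem_univ i)))
  have hprin : J.IsPrincipal := IsPrincipalIdealRing.principal J
  set h₀ : K[X] := Submodule.IsPrincipal.generator J with hh₀def
  have hh0f : h₀ ∣ f := (Submodule.IsPrincipal.mem_iff_generator_dvd J).mp hfJ
  have hh0P : h₀ ∣ ∏ i, g i := (Submodule.IsPrincipal.mem_iff_generator_dvd J).mp hPJ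
  have hh00 : h₀ ≠ 0 := by
    intro h
    rw [h] at hh0f
    exact hf0 (zero_dvd_iff.mp hh0f)
  have hh0deg : m ≤ h₀.natDegree := by
    refine artin hq2 hFcard hh00 ?_
    intro β
    have h1 : h₀ • Module.AEval'.of φ β = 0 :=
      Module.mem_annihilator.mp (Submodule.IsPrincipal.generator_mem J) _
    rw [smul_of_apply hφ] at h1
    exact (Module.AEval'.of φ).injective (by simpa using h1)
  have hfh0 : Associated h₀ f := assoc_of_dvd_of_deg hh0f hf0 (hfdeg ▸ hh0deg)
  have hfP : f ∣ ∏ i, g i := hfh0.symm.dvd.trans hh0P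
  have hP0 : (∏ i, g i) ≠ 0 := Finset.prod_ne_zero_iff.mpr (fun i _ => hg0 i)
  have hdegP : (∏ i, g i).natDegree = m := by
    rw [natDegree_prod _ _ (fun i _ => hg0 i), hsum]
  have hPassoc : Associated f (∏ i, g i) :=
    assoc_of_dvd_of_deg hfP hP0 (by rw [hdegP, hfdeg])
  have hsqP : Squarefree (∏ i, g i) := Squarefree.squarefree_of_dvd hPassoc.symm.dvd hsq
  have hcopr : ∀ i j : ι, i ≠ j → IsCoprime (g i) (g j) := by
    intro i j hij
    refine IsRelPrime.isCoprime ?_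
    intro z hzi hzj
    have h1 : g i * g j ∣ ∏ k, g k := by
      rw [← Finset.mul_prod_erase Finset.univ g (Finset.mem_univ i)]
      exact mul_dvd_mul_left _
        (Finset.dvd_prod_of_mem g (Finset.mem_erase.mpr ⟨hij.symm, Finset.mem_univ j⟩))
    exact hsqP z ((mul_dvd_mul hzi hzj).trans h1)
  -- CRT linear equivalence
  set I : Ideal K[X] := Ideal.span {f} with hI
  have hIker : I ≤ LinearMap.ker (LinearMap.pi fun i => (K[X] ∙ g i).mkQ) := by
    rw [hI, Ideal.span_le]
    intro x hx
    rw [Set.mem_singleton_iff] at hx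
    subst hx
    rw [SetLike.mem_coe, LinearMap.mem_ker]
    ext i
    rw [LinearMap.pi_apply, Submodule.mkQ_apply, Pi.zero_apply]
    rw [Submodule.Quotient.mk_eq_zero]
    obtain ⟨c, hc⟩ := hdvdf i
    exact Submodule.mem_span_singleton.mpr ⟨c, by rw [smul_eq_mul, mul_comm, ← hc]⟩
  set L : (K[X] ⧸ I) →ₗ[K[X]] Π i, K[X] ⧸ (K[X] ∙ g i) :=
    Submodule.liftQ I (LinearMap.pi fun i => (K[X] ∙ g i).mkQ) hIker with hL
  have hLinj : Function.Injective L := by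
    rw [← LinearMap.ker_eq_bot, LinearMap.ker_eq_bot']
    intro a ha
    obtain ⟨r, rfl⟩ := Submodule.Quotient.mk_surjective _ a
    rw [hL, Submodule.liftQ_apply] at ha
    have hdiv : ∀ i, g i ∣ r := by
      intro i
      have h2 : (K[X] ∙ g i).mkQ r = 0 := by
        have h3 := congrFun ha i
        rw [LinearMap.pi_apply, Pi.zero_apply] at h3
        exact h3
      rw [Submodule.mkQ_apply, Submodule.Quotient.mk_eq_zero] at h2
      obtain ⟨c, hc⟩ := Submodule.mem_span_singleton.mp h2
      exact ⟨c, by rw [← hc, smul_eq_mul, mul_comm]⟩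
    have hpw : Set.Pairwise ↑(Finset.univ : Finset ι) (Function.onFun IsCoprime g) :=
      fun i _ j _ hij => hcopr i j hij
    have hPr : (∏ i, g i) ∣ r := Finset.prod_dvd_of_coprime hpw (fun i _ => hdiv i)
    have hfr : f ∣ r := hPassoc.dvd.trans hPr
    rw [Submodule.Quotient.mk_eq_zero, hI]
    exact Ideal.mem_span_singleton.mpr hfr
  have hLsurj : Function.Surjective L := by
    intro x
    have hpair : Pairwise (Function.onFun IsCoprime fun i => Ideal.span {g i}) := by
      intro i j hij
      exact (Ideal.isCoprime_span_singleton_iff _ _).mpr (hcopr i j hij)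
    obtain ⟨r, hr⟩ := Ideal.pi_quotient_surjective hpair (fun i => x i)
    refine ⟨Submodule.Quotient.mk r, ?_⟩
    rw [hL, Submodule.liftQ_apply]
    funext i
    rw [LinearMap.pi_apply, Submodule.mkQ_apply]
    exact hr i
  set E := LinearEquiv.ofBijective L ⟨hLinj, hLsurj⟩ with hE
  set Θ : Module.AEval' φ ≃ₗ[K[X]] (K[X] ⧸ I) :=
    Ψ.trans ((DirectSum.linearEquivFunOnFintype K[X] ι
      (fun i => K[X] ⧸ (K[X] ∙ g i))).trans E.symm) with hΘ
  have keyiff : ∀ β : F, IsNormalElem q m K β ↔ IsUnit (Θ (Module.AEval'.of φ β)) := by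
    intro β
    have h1 := normal_iff_span hφ hqm hm0 hm β
    have h2 := span_top_equiv Θ (Module.AEval'.of φ β)
    have h3 := span_top_iff_isUnit (Θ (Module.AEval'.of φ β))
    exact (h1.trans h2.symm).trans h3
  have efinal : {β : F // IsNormalElem q m K β} ≃ (K[X] ⧸ I)ˣ :=
    (Equiv.subtypeEquiv ((Module.AEval'.of φ).toEquiv.trans Θ.toEquiv)
      (fun β => keyiff β)).trans unitsEquivIsUnit.symm
  rw [Nat.card_congr efinal]
  rfl

end Count
section Trace

variable {K : Type u'} {F : Type v'} [Field K] [Fintype K] [Field F] [Algebra K F]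
variable {q m : ℕ}

lemma trQ_eq (β : F) : trQ q 1 m β = ∑ i ∈ Finset.range m, β ^ q ^ i := by
  unfold trQ
  exact Finset.sum_congr rfl fun i _ => by rw [mul_one]

lemma normal_trace_ne_zero (hm0 : 0 < m) (β : F)
    (h : LinearIndependent K (fun i : Fin m => β ^ q ^ (i : ℕ))) :
    (∑ i ∈ Finset.range m, β ^ q ^ i) ≠ 0 := by
  intro h0
  have h2 : ∑ i : Fin m, (1 : K) • β ^ q ^ (i : ℕ) = 0 := by
    simp only [one_smul]
    rw [Fin.sum_univ_eq_sum_range (fun i => β ^ q ^ i) m]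
    exact h0
  have h3 := Fintype.linearIndependent_iff.mp h (fun _ => (1 : K)) h2 ⟨0, hm0⟩
  exact one_ne_zero h3

lemma trace_pow_q {φ : F →ₗ[K] F} (hφ : ∀ x : F, φ x = x ^ q)
    (hqm : ∀ x : F, x ^ q ^ m = x) (β : F) :
    (∑ i ∈ Finset.range m, β ^ q ^ i) ^ q = ∑ i ∈ Finset.range m, β ^ q ^ i := by
  have h1 : (∑ i ∈ Finset.range m, β ^ q ^ i) ^ q
      = ∑ i ∈ Finset.range m, β ^ q ^ (i + 1) := by
    rw [← hφ, map_sum]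
    exact Finset.sum_congr rfl fun i _ => by
      rw [hφ, ← pow_mul, ← pow_succ]
  rw [h1]
  have key : β ^ q ^ m = β ^ q ^ 0 := by rw [hqm, pow_zero, pow_one]
  have h2 := Finset.sum_range_succ (fun i => β ^ q ^ i) m
  have h3 := Finset.sum_range_succ' (fun i => β ^ q ^ i) m
  rw [h2, key] at h3
  exact (add_right_cancel h3).symm

lemma mem_range_alg_of_pow_q (hq : Fintype.card K = q) {t : F} (ht : t ^ q = t) :
    t ∈ Set.range (algebraMap K F) := by
  classical
  have hq2 : 2 ≤ q := hq ▸ Fintype.one_lt_card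
  by_contra hnot
  set s : Finset F := insert t (Finset.univ.image (algebraMap K F)) with hs
  have htni : t ∉ Finset.univ.image (algebraMap K F) := by
    intro hmem
    obtain ⟨c, _, hc⟩ := Finset.mem_image.mp hmem
    exact hnot ⟨c, hc⟩
  have hcard : s.card = q + 1 := by
    rw [hs, Finset.card_insert_of_notMem htni,
      Finset.card_image_of_injective _ (algebraMap K F).injective, Finset.card_univ, hq]
  set P : F[X] := X ^ q - X with hP
  have hP0 : P ≠ 0 := by
    intro h
    have hco : P.coeff q = 1 := by
      rw [hP, coeff_sub, coeff_X_pow, if_pos rfl, coeff_X, if_neg (by omega), sub_zero]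
    rw [h, coeff_zero] at hco
    exact one_ne_zero hco.symm
  have hdeg : P.natDegree ≤ q := by
    refine (natDegree_sub_le _ _).trans ?_
    simp only [natDegree_X_pow, natDegree_X]
    omega
  have heval : ∀ x ∈ s, P.eval x = 0 := by
    intro x hx
    rw [hP, eval_sub, eval_pow, eval_X]
    rcases Finset.mem_insert.mp hx with rfl | hx'
    · rw [ht, sub_self]
    · obtain ⟨c, _, rfl⟩ := Finset.mem_image.mp hx'
      rw [← map_pow, ← hq, FiniteField.pow_card, sub_self]
  have := eq_zero_of_natDegree_lt_card_of_eval_eq_zero' P s heval (by omega)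
  exact hP0 this

lemma cK_pow (hq : Fintype.card K = q) (c : K) (i : ℕ) : c ^ q ^ i = c := by
  rw [← hq]
  exact FiniteField.pow_card_pow i c

lemma conj_smul (hq : Fintype.card K = q) (c : K) (β : F) (i : ℕ) :
    (c • β) ^ q ^ i = c • β ^ q ^ i := by
  rw [_root_.smul_pow, cK_pow hq]

lemma normal_smul (hq : Fintype.card K = q) {c : K} (hc : c ≠ 0) (β : F)
    (h : LinearIndependent K (fun i : Fin m => β ^ q ^ (i : ℕ)) ∧
      Submodule.span K (Set.range fun i : Fin m => β ^ q ^ (i : ℕ)) = ⊤) :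
    LinearIndependent K (fun i : Fin m => (c • β) ^ q ^ (i : ℕ)) ∧
      Submodule.span K (Set.range fun i : Fin m => (c • β) ^ q ^ (i : ℕ)) = ⊤ := by
  have hconj : (fun i : Fin m => (c • β) ^ q ^ (i : ℕ))
      = fun i : Fin m => c • β ^ q ^ (i : ℕ) := funext fun i => conj_smul hq c β i
  rw [hconj]
  constructor
  · have h1 := h.1.units_smul (fun _ => Units.mk0 c hc)
    convert h1 using 1
    funext i; rfl
  · have h2 : (fun i : Fin m => c • β ^ q ^ (i : ℕ))
        = (LinearEquiv.smulOfNeZero K F c hc) ∘ (fun i : Fin m => β ^ q ^ (i : ℕ)) := by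
      funext i; rfl
    rw [h2, Set.range_comp, Submodule.span_image_linearEquiv, h.2, Submodule.map_top,
      LinearEquiv.range]

lemma trQ_smul (hq : Fintype.card K = q) (c : K) (β : F) :
    trQ q 1 m (c • β) = c • trQ q 1 m β := by
  rw [trQ_eq, trQ_eq, Finset.smul_sum]
  exact Finset.sum_congr rfl fun i _ => conj_smul hq c β i

end Trace
/-- for every `b ∈ F_q^*` there are exactly `Φ(x^m-1)/(q-1)` normal elements
of `F_{q^m}` with trace `b` over `F_q`. -/
theorem statement11 (q m : ℕ) (hm0 : 0 < m) (hcop : Nat.Coprime m q)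
    {K F : Type*} [Field K] [Fintype K] [Field F] [Algebra K F]
    (hq : Fintype.card K = q) [FiniteDimensional K F] (hm : Module.finrank K F = m)
    (b : K) (hb : b ≠ 0) :
    Nat.card {β : F // IsNormalElem q m K β ∧ trQ q 1 m β = algebraMap K F b} =
      PhiQ ((X : K[X]) ^ m - 1) / (q - 1) := by
  classical
  have hq2 : 2 ≤ q := hq ▸ Fintype.one_lt_card
  set pc := ringChar K with hpc
  haveI : CharP K pc := ringChar.charP K
  obtain ⟨n, hpprime, hqpn⟩ := FiniteField.card K pc
  rw [hq] at hqpn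
  haveI : Fact pc.Prime := ⟨hpprime⟩
  haveI hFchar : CharP F pc := charP_of_injective_algebraMap (algebraMap K F).injective pc
  have hadd : ∀ x y : F, (x + y) ^ q = x ^ q + y ^ q := by
    intro x y; rw [hqpn]; exact add_pow_char_pow x y pc n
  have hK : ∀ c : K, c ^ q = c := fun c => by rw [← hq]; exact FiniteField.pow_card c
  set φ : F →ₗ[K] F := frobL q hadd hK with hφdef
  have hφ : ∀ x : F, φ x = x ^ q := fun _ => rfl
  have hFfin : Finite F := Module.finite_of_finite K
  cases nonempty_fintype F
  have hqm : ∀ x : F, x ^ q ^ m = x := by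
    intro x
    have h1 : Fintype.card F = q ^ m := by rw [Module.card_eq_pow_finrank (K := K), hq, hm]
    rw [← h1]
    exact FiniteField.pow_card x
  have hmK : (m : K) ≠ 0 := by
    rw [Ne, CharP.cast_eq_zero_iff K pc m]
    intro hdvd
    have hpq : pc ∣ q := by
      rw [hqpn]
      exact dvd_pow_self pc n.pos.ne'
    have h1 : pc ∣ Nat.gcd m q := Nat.dvd_gcd hdvd hpq
    rw [Nat.Coprime] at hcop
    rw [hcop] at h1
    exact hpprime.ne_one (Nat.dvd_one.mp h1)
  have hsq : Squarefree ((X : K[X]) ^ m - 1) := by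
    have hsep := separable_X_pow_sub_C (1 : K) hmK one_ne_zero
    rw [map_one] at hsep
    exact hsep.squarefree
  have hcount := count_normal hq hm hm0 hφ hqm hsq
  have htmem : ∀ β : F, algebraMap K F (Function.invFun (algebraMap K F) (trQ q 1 m β))
      = trQ q 1 m β := by
    intro β
    apply Function.invFun_eq
    exact mem_range_alg_of_pow_q hq (t := trQ q 1 m β)
      (by rw [trQ_eq]; exact trace_pow_q hφ hqm β)
  set τ : F → K := fun β => Function.invFun (algebraMap K F) (trQ q 1 m β) with hτ
  set NB : K → ℕ := fun b' => (Finset.univ.filter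
     (fun β : F => IsNormalElem q m K β ∧ trQ q 1 m β = algebraMap K F b')).card with hNB
  have hgoal : Nat.card {β : F // IsNormalElem q m K β ∧ trQ q 1 m β = algebraMap K F b}
      = NB b := by
    rw [Nat.card_eq_fintype_card, Fintype.card_subtype]
  have hsplit : (Finset.univ.filter (fun β : F => IsNormalElem q m K β)).card
      = ∑ b' : K, NB b' := by
    rw [Finset.card_eq_sum_card_fiberwise (f := τ) (t := Finset.univ)
      (fun x _ => Finset.mem_univ _)]
    refine Finset.sum_congr rfl fun b' _ => ?_
    congr 1
    ext β
    simp only [Finset.mem_filter, Finset.mem_univ, true_and]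
    constructor
    · rintro ⟨h1, h2⟩
      exact ⟨h1, (htmem β).symm.trans (congrArg (algebraMap K F) h2)⟩
    · rintro ⟨h1, h2⟩
      refine ⟨h1, ?_⟩
      apply (algebraMap K F).injective
      exact (htmem β).trans h2
  have htot : (Finset.univ.filter (fun β : F => IsNormalElem q m K β)).card
      = PhiQ ((X : K[X]) ^ m - 1) := by
    rw [← hcount, Nat.card_eq_fintype_card, Fintype.card_subtype]
  have hzero : NB 0 = 0 := by
    rw [hNB]
    rw [Finset.card_eq_zero, Finset.filter_eq_empty_iff]
    rintro β - ⟨h1, h2⟩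
    rw [map_zero] at h2
    exact normal_trace_ne_zero hm0 β h1.1 (by rw [← trQ_eq]; exact h2)
  have hfib : ∀ b' : K, b' ≠ 0 → NB b' = NB b := by
    intro b' hb'
    set c : K := b / b' with hc
    have hc0 : c ≠ 0 := div_ne_zero hb hb'
    have hcb' : c * b' = b := div_mul_cancel₀ b hb'
    have hinvb : c⁻¹ * b = b' := by
      rw [hc]
      field_simp
    rw [hNB]
    apply Finset.card_bij (fun β _ => c • β)
    · intro β hβ
      simp only [Finset.mem_filter, Finset.mem_univ, true_and] at hβ ⊢
      obtain ⟨h1, h2⟩ := hβ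
      refine ⟨normal_smul hq hc0 β h1, ?_⟩
      rw [trQ_smul hq, h2, Algebra.smul_def, ← map_mul, hcb']
    · intro a₁ ha₁ a₂ ha₂ heq
      exact smul_right_injective F hc0 heq
    · intro γ hγ
      simp only [Finset.mem_filter, Finset.mem_univ, true_and] at hγ
      obtain ⟨h1, h2⟩ := hγ
      refine ⟨c⁻¹ • γ, ?_, ?_⟩
      · simp only [Finset.mem_filter, Finset.mem_univ, true_and]
        refine ⟨normal_smul hq (inv_ne_zero hc0) γ h1, ?_⟩
        rw [trQ_smul hq, h2, Algebra.smul_def, ← map_mul, hinvb]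
      · rw [smul_smul, mul_inv_cancel₀ hc0, one_smul]
  have hsum2 : ∑ b' : K, NB b' = (q - 1) * NB b := by
    rw [← Finset.sum_erase_add Finset.univ NB (Finset.mem_univ (0 : K)), hzero, add_zero]
    rw [Finset.sum_congr rfl (fun b' hb' => hfib b' (Finset.ne_of_mem_erase hb'))]
    rw [Finset.sum_const, smul_eq_mul, Finset.card_erase_of_mem (Finset.mem_univ _),
      Finset.card_univ, hq]
  rw [hgoal]
  have hPhi : PhiQ ((X : K[X]) ^ m - 1) = (q - 1) * NB b := by
    rw [← htot, hsplit, hsum2]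
  rw [hPhi, Nat.mul_div_cancel_left _ (by omega : 0 < q - 1)]
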